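/- arXiv:2002.01610 — 4 statements merged into one kernel-verified Lean document; each statement's English description precedes it below -/
import Mathlib

section
/- Let G be an activity-on-edge graph, let u and v be distinct vertices of G that have no outgoing task edges and have exactly the same set of outgoing neighbors, and let G' be the graph obtained from G by merging u and v into a single vertex. Then for all tasks T ≠ T', T reaches T' in G if and only if T reaches T' in G'. The symmetric statement holds when u and v have no incoming task edges and exactly the same set of incoming neighbors. -/
/-!
Merging `v` into `u` is a graph homomorphism, so paths of `G` map to paths of the merged
graph. Conversely, when `u` and `v` have the same out-neighbours, every edge of the merged
graph leaving the image of a vertex `a` lifts to an edge of `G` leaving `a` itself, so a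
path of the merged graph lifts edge by edge starting from `En t`; it ends at `St t'`
because that vertex is neither `u` nor `v`. The case of equal in-neighbours is the same
argument applied to reversed paths, lifted backwards from `St t'`.
-/

namespace AOEPaper

/-- An activity-on-edge graph: a directed multigraph on the vertex set `verts`,
whose task edges are indexed by the type `T` (the distinct task labels), each task `t`
being an edge from `St t` to `En t`, together with a multiset `unl` of unlabeled edges. -/
structure AOE (V T : Type) where
  verts : Finset V
  St : T → V
  En : T → V
  stMem : ∀ t, St t ∈ verts
  enMem : ∀ t, En t ∈ verts
  unl : Multiset (V × V)
  unlMem : ∀ e ∈ unl, e.1 ∈ verts ∧ e.2 ∈ verts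

/-- One-step adjacency: an unlabeled edge or a task edge from `a` to `b`. -/
def AOE.adj {V T : Type} (G : AOE V T) (a b : V) : Prop :=
  (a, b) ∈ G.unl ∨ ∃ t, G.St t = a ∧ G.En t = b

/-- The graph has no directed cycle. -/
def AOE.Acyclic {V T : Type} (G : AOE V T) : Prop :=
  ∀ v : V, ¬ Relation.TransGen G.adj v v

/-- Task `t` reaches task `t'`: `En t = St t'` or there is a directed path from
`En t` to `St t'` (intended only for `t ≠ t'`). -/
def AOE.reach {V T : Type} (G : AOE V T) (t t' : T) : Prop :=
  Relation.ReflTransGen G.adj (G.En t) (G.St t')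

/-- A sequence of tasks in which each task reaches the next. -/
def AOE.chain {V T : Type} (G : AOE V T) (l : List T) : Prop :=
  l.Chain' fun t t' => t ≠ t' ∧ G.reach t t'

/-- A potential critical path: a maximal sequence of tasks in which each task
reaches the next (not a subsequence of any other such sequence). -/
def AOE.critPath {V T : Type} (G : AOE V T) (l : List T) : Prop :=
  G.chain l ∧ ∀ l' : List T, G.chain l' → l.Sublist l' → l' = l

/-- Two AOEs with the same task labels are equivalent if they have the same set of
potential critical paths. -/
def AOE.Equiv {V W T : Type} (G : AOE V T) (H : AOE W T) : Prop :=
  ∀ l : List T, G.critPath l ↔ H.critPath l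

/-- An AOE is optimal if it minimizes the number of vertices in its equivalence class. -/
def Optimal {W T : Type} (G : AOE W T) : Prop :=
  ∀ (U : Type) (H : AOE U T), H.Acyclic → AOE.Equiv G H → G.verts.card ≤ H.verts.card

/-- The vertex map replacing `v` by `u`. -/
def mergeV {V : Type} [DecidableEq V] (u v x : V) : V := if x = v then u else x

theorem mergeV_mem {V : Type} [DecidableEq V] {S : Finset V} (u v x : V) (hx : x ∈ S) :
    mergeV u v x ∈ insert u (S.erase v) := by
  unfold mergeV
  split_ifs with h
  · exact Finset.mem_insert_self _ _
  · exact Finset.mem_insert_of_mem (Finset.mem_erase.mpr ⟨h, hx⟩)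

/-- Merge vertices `u` and `v` into the single vertex `u`. -/
def AOE.merge {V T : Type} [DecidableEq V] (G : AOE V T) (u v : V) : AOE V T where
  verts := insert u (G.verts.erase v)
  St t := mergeV u v (G.St t)
  En t := mergeV u v (G.En t)
  stMem t := mergeV_mem u v (G.St t) (G.stMem t)
  enMem t := mergeV_mem u v (G.En t) (G.enMem t)
  unl := G.unl.map fun e => (mergeV u v e.1, mergeV u v e.2)
  unlMem := by
    intro e he
    rw [Multiset.mem_map] at he
    obtain ⟨a, ha, rfl⟩ := he
    obtain ⟨h1, h2⟩ := G.unlMem a ha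
    exact ⟨mergeV_mem u v a.1 h1, mergeV_mem u v a.2 h2⟩

/-- Delete one copy of the unlabeled edge `(u, v)`. -/
def AOE.delUnl {V T : Type} [DecidableEq V] (G : AOE V T) (u v : V) : AOE V T where
  verts := G.verts
  St := G.St
  En := G.En
  stMem := G.stMem
  enMem := G.enMem
  unl := G.unl.erase (u, v)
  unlMem := fun e he => G.unlMem e (Multiset.mem_of_mem_erase he)

/-- Rule 1 (outgoing version): `u` and `v` are distinct vertices with no outgoing task
edges and precisely the same outgoing neighbors. -/
def Rule1OutCond {V T : Type} (G : AOE V T) (u v : V) : Prop :=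
  u ∈ G.verts ∧ v ∈ G.verts ∧ u ≠ v ∧
    (∀ t, G.St t ≠ u) ∧ (∀ t, G.St t ≠ v) ∧ ∀ w, G.adj u w ↔ G.adj v w

/-- Rule 1 (incoming version): `u` and `v` are distinct vertices with no incoming task
edges and precisely the same incoming neighbors. -/
def Rule1InCond {V T : Type} (G : AOE V T) (u v : V) : Prop :=
  u ∈ G.verts ∧ v ∈ G.verts ∧ u ≠ v ∧
    (∀ t, G.En t ≠ u) ∧ (∀ t, G.En t ≠ v) ∧ ∀ w, G.adj w u ↔ G.adj w v

/-- Rule 2: `(u, v)` is an unlabeled edge and there is another directed path from `u`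
to `v` not using this edge. -/
def Rule2Cond {V T : Type} [DecidableEq V] (G : AOE V T) (u v : V) : Prop :=
  (u, v) ∈ G.unl ∧ Relation.TransGen (G.delUnl u v).adj u v

/-- Rule 3: `(u, v)` is an unlabeled edge such that (i) there is no other path from `u`
to `v`; (ii) if `u` has an outgoing task then `v` has no incoming edge other than `(u,v)`;
(iii) if `v` has an incoming task then `u` has no outgoing edge other than `(u,v)`;
(iv) every incoming neighbor of `v` has a path to every outgoing neighbor of `u`. -/
def Rule3Cond {V T : Type} [DecidableEq V] (G : AOE V T) (u v : V) : Prop :=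
  (u, v) ∈ G.unl ∧
  (¬ Relation.TransGen (G.delUnl u v).adj u v) ∧
  ((∃ t, G.St t = u) → (∀ t, G.En t ≠ v) ∧ ∀ w, (w, v) ∈ G.unl → w = u) ∧
  ((∃ t, G.En t = v) → (∀ t, G.St t ≠ u) ∧ ∀ w, (u, w) ∈ G.unl → w = v) ∧
  ∀ w z, G.adj w v → G.adj u z → Relation.ReflTransGen G.adj w z

/-- One application of a simplification rule. -/
inductive Step {V T : Type} [DecidableEq V] : AOE V T → AOE V T → Prop
  | rule1out {G : AOE V T} (u v : V) : Rule1OutCond G u v → Step G (G.merge u v)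
  | rule1in {G : AOE V T} (u v : V) : Rule1InCond G u v → Step G (G.merge u v)
  | rule2 {G : AOE V T} (u v : V) : Rule2Cond G u v → Step G (G.delUnl u v)
  | rule3 {G : AOE V T} (u v : V) : Rule3Cond G u v → Step G ((G.delUnl u v).merge u v)

/-- A canonical AOE: the naive expansion of an activity-on-node graph. Each task has its
own pair of endpoint vertices, all pairwise distinct; there are a global start vertex `s`
and a global end vertex `e`; unlabeled edges other than those leaving `s` or entering `e`
go from end vertices of tasks to start vertices of tasks; `s` has unlabeled edges to
exactly the vertices whose only incoming edges come from `s`, and `e` has unlabeled edges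
from exactly the vertices whose only outgoing edges go to `e`. -/
def Canonical {V T : Type} [DecidableEq V] [Fintype T] (G : AOE V T) : Prop :=
  G.Acyclic ∧ G.unl.Nodup ∧
  Function.Injective G.St ∧ Function.Injective G.En ∧
  (∀ t t' : T, G.St t ≠ G.En t') ∧
  ∃ s e : V, s ≠ e ∧ s ∈ G.verts ∧ e ∈ G.verts ∧
    (∀ t, G.St t ≠ s ∧ G.St t ≠ e ∧ G.En t ≠ s ∧ G.En t ≠ e) ∧
    (G.verts =
      insert s (insert e (Finset.image G.St Finset.univ ∪ Finset.image G.En Finset.univ))) ∧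
    (∀ a b : V, (a, b) ∈ G.unl → a ≠ s → b ≠ e → (∃ t, G.En t = a) ∧ ∃ t', G.St t' = b) ∧
    (∀ b : V, (s, b) ∈ G.unl ↔
      b ∈ G.verts ∧ b ≠ s ∧ (∀ t, G.En t ≠ b) ∧ ∀ a, (a, b) ∈ G.unl → a = s) ∧
    (∀ a : V, (a, e) ∈ G.unl ↔
      a ∈ G.verts ∧ a ≠ e ∧ (∀ t, G.St t ≠ a) ∧ ∀ b, (a, b) ∈ G.unl → b = e)

/-- An output AOE: obtained from a canonical AOE by a finite sequence of rule
applications, such that no rule can still be applied. -/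
def IsOutput {V T : Type} [DecidableEq V] [Fintype T] (G A : AOE V T) : Prop :=
  Canonical G ∧ Relation.ReflTransGen Step G A ∧ ∀ B : AOE V T, ¬ Step A B

theorem mergeSetV_mem {V : Type} [DecidableEq V] {S : Finset V} (C : Finset V) (c x : V)
    (hx : x ∈ S) : (if x ∈ C then c else x) ∈ insert c (S \ C) := by
  split_ifs with h
  · exact Finset.mem_insert_self _ _
  · exact Finset.mem_insert_of_mem (Finset.mem_sdiff.mpr ⟨hx, h⟩)

/-- Merge all vertices of `C` into the single vertex `c`. -/
def AOE.mergeSet {V T : Type} [DecidableEq V] (G : AOE V T) (C : Finset V) (c : V) :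
    AOE V T where
  verts := insert c (G.verts \ C)
  St t := if G.St t ∈ C then c else G.St t
  En t := if G.En t ∈ C then c else G.En t
  stMem t := mergeSetV_mem C c (G.St t) (G.stMem t)
  enMem t := mergeSetV_mem C c (G.En t) (G.enMem t)
  unl := G.unl.map fun e => (if e.1 ∈ C then c else e.1, if e.2 ∈ C then c else e.2)
  unlMem := by
    intro e he
    rw [Multiset.mem_map] at he
    obtain ⟨a, ha, rfl⟩ := he
    obtain ⟨h1, h2⟩ := G.unlMem a ha
    exact ⟨mergeSetV_mem C c a.1 h1, mergeSetV_mem C c a.2 h2⟩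

theorem reflTransGen_of_reflTransGen_map {α β : Type*} {r : α → α → Prop} {s : β → β → Prop}
    {f : α → β} (hlift : ∀ a c, s (f a) c → ∃ b, f b = c ∧ r a b) {a b : α}
    (hb : ∀ x, f x = f b → x = b) (h : Relation.ReflTransGen s (f a) (f b)) :
    Relation.ReflTransGen r a b := by
  generalize hfa : f a = c at h
  induction h using Relation.ReflTransGen.head_induction_on generalizing a with
  | refl => exact hb a hfa ▸ .refl
  | head hcd _ ih =>
    obtain ⟨a', rfl, ha'⟩ := hlift a _ (hfa ▸ hcd)
    exact .head ha' (ih rfl)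

section Merge

variable {V T : Type} [DecidableEq V] {u v : V}

lemma mergeV_eq_mergeV_cases {x y : V} (h : mergeV u v x = mergeV u v y) :
    x = y ∨ ((x = u ∨ x = v) ∧ (y = u ∨ y = v)) := by
  unfold mergeV at h
  split_ifs at h <;> tauto

lemma eq_of_mergeV_eq {x y : V} (hyu : y ≠ u) (hyv : y ≠ v)
    (h : mergeV u v x = mergeV u v y) : x = y := by
  rcases mergeV_eq_mergeV_cases h with h | ⟨-, rfl | rfl⟩ <;> tauto

lemma iff_of_mergeV_eq {R : V → V → Prop} (hR : ∀ w, R u w ↔ R v w) {x y : V}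
    (h : mergeV u v x = mergeV u v y) (w : V) : R x w ↔ R y w := by
  rcases mergeV_eq_mergeV_cases h with rfl | ⟨rfl | rfl, rfl | rfl⟩
  all_goals first | exact Iff.rfl | exact hR w | exact (hR w).symm

lemma AOE.merge_adj_iff (G : AOE V T) {p q : V} :
    (G.merge u v).adj p q ↔ ∃ a b, mergeV u v a = p ∧ mergeV u v b = q ∧ G.adj a b := by
  constructor
  · rintro (h | ⟨t, rfl, rfl⟩)
    · obtain ⟨⟨a, b⟩, hab, he⟩ := Multiset.mem_map.mp h
      exact ⟨a, b, congrArg Prod.fst he, congrArg Prod.snd he, Or.inl hab⟩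
    · exact ⟨G.St t, G.En t, rfl, rfl, Or.inr ⟨t, rfl, rfl⟩⟩
  · rintro ⟨a, b, rfl, rfl, hab | ⟨t, rfl, rfl⟩⟩
    · exact Or.inl (Multiset.mem_map.mpr ⟨(a, b), hab, rfl⟩)
    · exact Or.inr ⟨t, rfl, rfl⟩

lemma AOE.reach_merge_of_reach (G : AOE V T) {t t' : T} (h : G.reach t t') :
    (G.merge u v).reach t t' :=
  h.lift (mergeV u v) fun a b hab => G.merge_adj_iff.mpr ⟨a, b, rfl, rfl, hab⟩

lemma AOE.exists_adj_of_merge_adj_left {G : AOE V T} (hadj : ∀ w, G.adj u w ↔ G.adj v w)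
    {a c : V} (h : (G.merge u v).adj (mergeV u v a) c) :
    ∃ b, mergeV u v b = c ∧ G.adj a b := by
  obtain ⟨a', b, ha', rfl, hab⟩ := G.merge_adj_iff.mp h
  exact ⟨b, rfl, (iff_of_mergeV_eq hadj ha' b).mp hab⟩

lemma AOE.exists_adj_of_merge_adj_right {G : AOE V T} (hadj : ∀ w, G.adj w u ↔ G.adj w v)
    {b c : V} (h : (G.merge u v).adj c (mergeV u v b)) :
    ∃ a, mergeV u v a = c ∧ G.adj a b := by
  obtain ⟨a, b', rfl, hb', hab⟩ := G.merge_adj_iff.mp h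
  exact ⟨a, rfl, (iff_of_mergeV_eq (R := flip G.adj) hadj hb' a).mp hab⟩

end Merge

theorem stmt1_general {V T : Type} [DecidableEq V] (G : AOE V T) (u v : V)
    (hrule : ((∀ t, G.St t ≠ u) ∧ (∀ t, G.St t ≠ v) ∧ ∀ w, G.adj u w ↔ G.adj v w) ∨
      ((∀ t, G.En t ≠ u) ∧ (∀ t, G.En t ≠ v) ∧ ∀ w, G.adj w u ↔ G.adj w v)) :
    ∀ t t' : T, t ≠ t' → (G.reach t t' ↔ (G.merge u v).reach t t') := by
  intro t t' _
  refine ⟨G.reach_merge_of_reach, fun h => ?_⟩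
  rcases hrule with ⟨hSu, hSv, hadj⟩ | ⟨hEu, hEv, hadj⟩
  · exact reflTransGen_of_reflTransGen_map
      (fun _ _ => AOE.exists_adj_of_merge_adj_left hadj)
      (fun _ => eq_of_mergeV_eq (hSu t') (hSv t')) h
  · exact Relation.reflTransGen_swap.mp <| reflTransGen_of_reflTransGen_map
      (fun _ _ => AOE.exists_adj_of_merge_adj_right hadj)
      (fun _ => eq_of_mergeV_eq (hEu t) (hEv t)) (Relation.reflTransGen_swap.mpr h)

/-- Rule 1 (merging two vertices with no outgoing task edges and the same
outgoing neighbors, or symmetrically for incoming) preserves the reachability relation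
on tasks. -/
theorem stmt1 {V T : Type} [DecidableEq V] (G : AOE V T) (hG : G.Acyclic)
    (u v : V) (hu : u ∈ G.verts) (hv : v ∈ G.verts) (huv : u ≠ v)
    (hrule : ((∀ t, G.St t ≠ u) ∧ (∀ t, G.St t ≠ v) ∧ ∀ w, G.adj u w ↔ G.adj v w) ∨
      ((∀ t, G.En t ≠ u) ∧ (∀ t, G.En t ≠ v) ∧ ∀ w, G.adj w u ↔ G.adj w v)) :
    ∀ t t' : T, t ≠ t' → (G.reach t t' ↔ (G.merge u v).reach t t') :=
  stmt1_general G u v hrule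

end AOEPaper
end

section
/- Let G be an activity-on-edge graph containing an unlabeled edge (u, v) such that there is another directed path from u to v in G not using this edge, and let G' be the graph obtained from G by deleting the edge (u, v). Then for all tasks T ≠ T', T reaches T' in G if and only if T reaches T' in G'. -/
namespace AOEPaper

theorem AOE.delUnl_adj_le {V T : Type} [DecidableEq V] (G : AOE V T) (u v : V) :
    (G.delUnl u v).adj ≤ G.adj :=
  fun _ _ => Or.imp_left Multiset.mem_of_mem_erase

theorem AOE.adj_le_reflTransGen_delUnl_adj {V T : Type} [DecidableEq V] {G : AOE V T}
    {u v : V} (hpath : Relation.ReflTransGen (G.delUnl u v).adj u v) :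
    G.adj ≤ Relation.ReflTransGen (G.delUnl u v).adj := by
  rintro a b (h | h)
  · by_cases hab : (a, b) = (u, v)
    · obtain ⟨rfl, rfl⟩ := Prod.mk.inj hab
      exact hpath
    · exact .single (Or.inl ((Multiset.mem_erase_of_ne hab).mpr h))
  · exact .single (Or.inr h)

theorem AOE.reflTransGen_adj_iff_delUnl {V T : Type} [DecidableEq V] {G : AOE V T}
    {u v : V} (hpath : Relation.ReflTransGen (G.delUnl u v).adj u v) {a b : V} :
    Relation.ReflTransGen G.adj a b ↔ Relation.ReflTransGen (G.delUnl u v).adj a b :=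
  ⟨Relation.reflTransGen_closed (G.adj_le_reflTransGen_delUnl_adj hpath) a b,
    Relation.ReflTransGen.mono (G.delUnl_adj_le u v) a b⟩

theorem stmt2_general {V T : Type} [DecidableEq V] (G : AOE V T)
    (u v : V)
    (hpath : Relation.TransGen (G.delUnl u v).adj u v) :
    ∀ t t' : T, t ≠ t' → (G.reach t t' ↔ (G.delUnl u v).reach t t') :=
  fun _ _ _ => G.reflTransGen_adj_iff_delUnl hpath.to_reflTransGen

/-- Rule 2 (deleting an unlabeled edge `(u, v)` when another directed path
from `u` to `v` exists) preserves the reachability relation on tasks. -/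
theorem stmt2 {V T : Type} [DecidableEq V] (G : AOE V T) (hG : G.Acyclic)
    (u v : V) (he : (u, v) ∈ G.unl)
    (hpath : Relation.TransGen (G.delUnl u v).adj u v) :
    ∀ t t' : T, t ≠ t' → (G.reach t t' ↔ (G.delUnl u v).reach t t') :=
  stmt2_general G u v hpath

end AOEPaper
end

section
/- Let G be an activity-on-edge graph with an unlabeled edge (u, v) satisfying all of: (i) there is no directed path from u to v in G other than the edge (u, v) itself; (ii) if u has an outgoing task edge then v has no incoming edge other than (u, v); (iii) if v has an incoming task edge then u has no outgoing edge other than (u, v); (iv) every incoming neighbor of v has a directed path in G to every outgoing neighbor of u. Let G' be the graph obtained from G by merging u and v into a single vertex. Then for all tasks T ≠ T', T reaches T' in G if and only if T reaches T' in G'. -/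
namespace AOEPaper

/-!
Merging `v` into `u` maps paths of `G` to paths of the merged graph, the edge `(u, v)`
collapsing to a point. Conversely, a path of the merged graph lifts to `G` edge by edge; the
only obstruction is a lifted path sitting at `v` that has to continue along an edge out of `u`.
If `v` has an incoming task, condition (iii) says that this edge leads back to `v`; otherwise
the lifted path entered `v` through an in-neighbour `w`, and condition (iv) gives a path from
`w` to the next vertex. A lifted path ending at `v` where the target task starts at `u` is
pulled back to `u` by condition (ii).
-/

section MergeV

variable {V : Type} [DecidableEq V] {u v : V}

@[simp]
theorem mergeV_left : mergeV u v u = u := by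
  simp [mergeV]

@[simp]
theorem mergeV_right : mergeV u v v = u :=
  if_pos rfl

theorem eq_or_of_mergeV_eq {a b : V} (h : mergeV u v a = mergeV u v b) :
    a = b ∨ (a = u ∧ b = v) ∨ (a = v ∧ b = u) := by
  unfold mergeV at h
  split_ifs at h <;> subst_vars <;> simp_all

end MergeV

namespace AOE

variable {V T : Type} [DecidableEq V] (G : AOE V T) (u v : V)

theorem adj_merge_iff {a b : V} :
    (G.merge u v).adj a b ↔ ∃ p q, mergeV u v p = a ∧ mergeV u v q = b ∧ G.adj p q := by
  simp only [adj, merge, Multiset.mem_map, Prod.ext_iff]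
  aesop

theorem adj_of_delUnl_adj {a b : V} (h : (G.delUnl u v).adj a b) : G.adj a b :=
  h.imp_left Multiset.mem_of_mem_erase

theorem delUnl_adj_of_adj {a b : V} (h : G.adj a b) (hab : (a, b) ≠ (u, v)) :
    (G.delUnl u v).adj a b :=
  h.imp_left (Multiset.mem_erase_of_ne hab).mpr

theorem reflTransGen_merge_delUnl_of_reflTransGen {a b : V}
    (h : Relation.ReflTransGen G.adj a b) :
    Relation.ReflTransGen ((G.delUnl u v).merge u v).adj (mergeV u v a) (mergeV u v b) := by
  refine Relation.ReflTransGen.lift' (mergeV u v) (fun p q hpq => ?_) _ _ h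
  by_cases hpq' : (p, q) = (u, v)
  · obtain ⟨rfl, rfl⟩ := Prod.mk.inj hpq'
    simpa [Function.onFun] using Relation.ReflTransGen.refl
  · exact .single <|
      (adj_merge_iff _ u v).mpr ⟨p, q, rfl, rfl, G.delUnl_adj_of_adj u v hpq hpq'⟩

theorem exists_lift_adj_merge_delUnl (hrule : Rule3Cond G u v) {x y p q : V}
    (hx : x = v → ∃ s, G.En s = v) (hxy : Relation.ReflTransGen G.adj x y)
    (hyp : mergeV u v y = mergeV u v p) (hpq : (G.delUnl u v).adj p q) :
    ∃ y', mergeV u v y' = mergeV u v q ∧ Relation.ReflTransGen G.adj x y' := by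
  obtain ⟨huv, -, -, hv_task, hnbr⟩ := hrule
  have hpq' := G.adj_of_delUnl_adj u v hpq
  rcases eq_or_of_mergeV_eq hyp with rfl | ⟨hyu, hpv⟩ | ⟨hyv, hpu⟩
  · exact ⟨q, rfl, hxy.tail hpq'⟩
  · subst y p
    exact ⟨q, rfl, (hxy.tail (Or.inl huv)).tail hpq'⟩
  · subst y p
    by_cases htask : ∃ s, G.En s = v
    · obtain ⟨hu_no_task, hu_out⟩ := hv_task htask
      rcases hpq with h | ⟨s, hs, -⟩
      · exact ⟨v, by rw [hu_out q (Multiset.mem_of_mem_erase h)], hxy⟩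
      · exact absurd hs (hu_no_task s)
    · rcases hxy.cases_tail with rfl | ⟨w, hxw, hwv⟩
      · exact absurd (hx rfl) htask
      · exact ⟨q, rfl, hxw.trans (hnbr w q hwv hpq')⟩

theorem exists_lift_reflTransGen_merge_delUnl (hrule : Rule3Cond G u v) {x b : V}
    (hx : x = v → ∃ s, G.En s = v)
    (h : Relation.ReflTransGen ((G.delUnl u v).merge u v).adj (mergeV u v x) b) :
    ∃ y, mergeV u v y = b ∧ Relation.ReflTransGen G.adj x y := by
  induction h with
  | refl => exact ⟨x, rfl, .refl⟩
  | tail _ hstep ih =>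
    obtain ⟨y, hy, hxy⟩ := ih
    obtain ⟨p, q, hp, rfl, hpq⟩ := (adj_merge_iff _ u v).mp hstep
    exact G.exists_lift_adj_merge_delUnl u v hrule hx hxy (hy.trans hp.symm) hpq

theorem reach_of_reflTransGen_of_mergeV_eq (hrule : Rule3Cond G u v) {t t' : T} {y : V}
    (hy : Relation.ReflTransGen G.adj (G.En t) y)
    (hyt : mergeV u v y = mergeV u v (G.St t')) : G.reach t t' := by
  obtain ⟨huv, -, hu_task, -, -⟩ := hrule
  rcases eq_or_of_mergeV_eq hyt with rfl | ⟨hyu, hst⟩ | ⟨hyv, hst⟩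
  · exact hy
  · subst y
    rw [reach, hst]
    exact hy.tail (Or.inl huv)
  · subst y
    obtain ⟨hv_no_task, hv_in⟩ := hu_task ⟨t', hst⟩
    rcases hy.cases_tail with hv | ⟨w, hw, hwv | ⟨s, -, hs⟩⟩
    · exact absurd hv.symm (hv_no_task t)
    · rwa [reach, hst, ← hv_in w hwv]
    · exact absurd hs (hv_no_task s)

end AOE

theorem stmt3_general {V T : Type} [DecidableEq V] (G : AOE V T)
    (u v : V) (hrule : Rule3Cond G u v) :
    ∀ t t' : T, t ≠ t' → (G.reach t t' ↔ ((G.delUnl u v).merge u v).reach t t') := by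
  intro t t' _
  refine ⟨G.reflTransGen_merge_delUnl_of_reflTransGen u v, fun h => ?_⟩
  obtain ⟨y, hy, hpath⟩ :=
    G.exists_lift_reflTransGen_merge_delUnl u v hrule (fun h => ⟨t, h⟩) h
  exact G.reach_of_reflTransGen_of_mergeV_eq u v hrule hpath hy

/-- Rule 3 (merging the endpoints of an unlabeled edge `(u, v)` satisfying
the four conditions, the edge `(u, v)` disappearing) preserves the reachability relation
on tasks. -/
theorem stmt3 {V T : Type} [DecidableEq V] (G : AOE V T) (hG : G.Acyclic)
    (u v : V) (hrule : Rule3Cond G u v) :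
    ∀ t t' : T, t ≠ t' → (G.reach t t' ↔ ((G.delUnl u v).merge u v).reach t t') :=
  stmt3_general G u v hrule

end AOEPaper
end

section
/- Every output AOE of the simplification algorithm is acyclic; that is, if 𝒜 is obtained from a canonical AOE by a finite sequence of applications of Rules 1, 2, and 3, then 𝒜 contains no directed cycle. -/
namespace AOEPaper

/-!
Each rule preserves acyclicity. Rule 2 only deletes an edge. Rules 1 and 3 contract two
vertices `u`, `v` of an acyclic graph between which there is no directed path in either
direction (for Rule 1 such a path would close a cycle through the shared neighbours, for
Rule 3 together with the edge `(u, v)`), and such a contraction creates no cycle: a cycle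
through the contracted vertex would lift to a path between `u` and `v`.
-/

namespace AOE

variable {V T : Type}

lemma Acyclic.not_transGen_of_forall_adj_iff {G : AOE V T} {u v : V} (hG : G.Acyclic)
    (hout : ∀ w, G.adj u w ↔ G.adj v w) : ¬ Relation.TransGen G.adj u v := by
  intro h
  obtain ⟨c, huc, hcv⟩ := Relation.TransGen.head'_iff.mp h
  exact hG v (Relation.TransGen.head' ((hout c).mp huc) hcv)

lemma Acyclic.not_transGen_of_forall_adj_iff' {G : AOE V T} {u v : V} (hG : G.Acyclic)
    (hin : ∀ w, G.adj w u ↔ G.adj w v) : ¬ Relation.TransGen G.adj u v := by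
  intro h
  obtain ⟨c, huc, hcv⟩ := Relation.TransGen.tail'_iff.mp h
  exact hG u (Relation.TransGen.tail' huc ((hin c).mpr hcv))

variable [DecidableEq V]

lemma adj_of_adj_delUnl {G : AOE V T} {u v a b : V} (h : (G.delUnl u v).adj a b) :
    G.adj a b :=
  h.imp_left Multiset.mem_of_mem_erase

lemma transGen_of_transGen_delUnl {G : AOE V T} {u v a b : V}
    (h : Relation.TransGen (G.delUnl u v).adj a b) : Relation.TransGen G.adj a b :=
  Relation.TransGen.mono (fun _ _ => adj_of_adj_delUnl) _ _ h

lemma Acyclic.delUnl {G : AOE V T} (hG : G.Acyclic) (u v : V) : (G.delUnl u v).Acyclic :=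
  fun x hx => hG x (transGen_of_transGen_delUnl hx)

lemma mergeV_ne_right {u v : V} (huv : u ≠ v) (x : V) : mergeV u v x ≠ v := by
  unfold mergeV
  split_ifs with h
  exacts [huv, h]

lemma mergeV_eq_mergeV {u v a b : V} (h : mergeV u v a = mergeV u v b) :
    a = b ∨ ((a = u ∨ a = v) ∧ (b = u ∨ b = v)) := by
  unfold mergeV at h
  split_ifs at h <;> grind

lemma exists_adj_of_adj_merge {G : AOE V T} {u v a b : V} (h : (G.merge u v).adj a b) :
    ∃ a' b', mergeV u v a' = a ∧ mergeV u v b' = b ∧ G.adj a' b' := by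
  rcases h with h | ⟨t, rfl, rfl⟩
  · obtain ⟨e, he, heq⟩ := Multiset.mem_map.mp h
    exact ⟨e.1, e.2, congrArg Prod.fst heq, congrArg Prod.snd heq, Or.inl he⟩
  · exact ⟨G.St t, G.En t, rfl, rfl, Or.inr ⟨t, rfl, rfl⟩⟩

section Merge

variable {G : AOE V T} {u v : V}
  (hD : ∀ a b, (a = u ∨ a = v) → (b = u ∨ b = v) → ¬ Relation.TransGen G.adj a b)
include hD

/-- A path of `G.merge u v` lifts to `G` up to at most one switch between `u` and `v`:
a second switch would need a path of `G` from `{u, v}` back into `{u, v}`. -/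
lemma lift_transGen_merge {x y x' : V} (h : Relation.TransGen (G.merge u v).adj x y)
    (hx' : mergeV u v x' = x) :
    ∃ y', mergeV u v y' = y ∧
      (Relation.TransGen G.adj x' y' ∨
        ∃ d d', (d = u ∨ d = v) ∧ (d' = u ∨ d' = v) ∧
          Relation.ReflTransGen G.adj x' d ∧ Relation.TransGen G.adj d' y') := by
  induction h with
  | single hxy =>
    obtain ⟨a', b', rfl, rfl, hab⟩ := exists_adj_of_adj_merge hxy
    rcases mergeV_eq_mergeV hx'.symm with rfl | ⟨ha'uv, hx'uv⟩
    · exact ⟨b', rfl, Or.inl (.single hab)⟩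
    · exact ⟨b', rfl, Or.inr ⟨x', a', hx'uv, ha'uv, .refl, .single hab⟩⟩
  | tail _ hzy ih =>
    obtain ⟨z', rfl, hpath⟩ := ih
    obtain ⟨a', b', ha', rfl, hab⟩ := exists_adj_of_adj_merge hzy
    rcases mergeV_eq_mergeV ha' with rfl | ⟨ha'uv, hz'uv⟩
    · refine ⟨b', rfl, ?_⟩
      rcases hpath with hp | ⟨d, d', hd, hd', hp₁, hp₂⟩
      · exact Or.inl (hp.tail hab)
      · exact Or.inr ⟨d, d', hd, hd', hp₁, hp₂.tail hab⟩
    · rcases hpath with hp | ⟨d, d', -, hd', -, hp₂⟩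
      · exact ⟨b', rfl, Or.inr ⟨z', a', hz'uv, ha'uv, hp.to_reflTransGen, .single hab⟩⟩
      · exact absurd hp₂ (hD d' z' hd' hz'uv)

lemma Acyclic.merge (hG : G.Acyclic) (huv : u ≠ v) : (G.merge u v).Acyclic := by
  intro x hx
  have hxv : x ≠ v := by
    obtain ⟨b, hxb, -⟩ := Relation.TransGen.head'_iff.mp hx
    obtain ⟨a', -, rfl, -, -⟩ := exists_adj_of_adj_merge hxb
    exact mergeV_ne_right huv a'
  have hfx : mergeV u v x = x := if_neg hxv
  obtain ⟨y', hy', hpath⟩ := lift_transGen_merge hD hx hfx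
  rcases mergeV_eq_mergeV (hy'.trans hfx.symm) with rfl | ⟨hy'uv, hxuv⟩
  · rcases hpath with hp | ⟨d, d', hd, hd', hp₁, hp₂⟩
    · exact hG y' hp
    · exact hD d' d hd' hd (hp₂.trans_left hp₁)
  · rcases hpath with hp | ⟨d, d', -, hd', -, hp₂⟩
    · exact hD x y' hxuv hy'uv hp
    · exact hD d' y' hd' hy'uv hp₂

end Merge

lemma Acyclic.merge_of_not_transGen {G : AOE V T} {u v : V} (hG : G.Acyclic) (huv : u ≠ v)
    (hnuv : ¬ Relation.TransGen G.adj u v) (hnvu : ¬ Relation.TransGen G.adj v u) :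
    (G.merge u v).Acyclic := by
  refine hG.merge (fun a b ha hb hab => ?_) huv
  rcases ha with rfl | rfl <;> rcases hb with rfl | rfl
  exacts [hG _ hab, hnuv hab, hnvu hab, hG _ hab]

end AOE

lemma Step.acyclic {V T : Type} [DecidableEq V] {G A : AOE V T} (h : Step G A)
    (hG : G.Acyclic) : A.Acyclic := by
  cases h with
  | rule1out u v hc =>
    obtain ⟨-, -, huv, -, -, hout⟩ := hc
    exact hG.merge_of_not_transGen huv (hG.not_transGen_of_forall_adj_iff hout)
      (hG.not_transGen_of_forall_adj_iff fun w => (hout w).symm)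
  | rule1in u v hc =>
    obtain ⟨-, -, huv, -, -, hin⟩ := hc
    exact hG.merge_of_not_transGen huv (hG.not_transGen_of_forall_adj_iff' hin)
      (hG.not_transGen_of_forall_adj_iff' fun w => (hin w).symm)
  | rule2 u v _ => exact hG.delUnl u v
  | rule3 u v hc =>
    obtain ⟨hedge, hnuv, -, -, -⟩ := hc
    have hnvu : ¬ Relation.TransGen (G.delUnl u v).adj v u := fun hvu =>
      hG u (.head (Or.inl hedge) (AOE.transGen_of_transGen_delUnl hvu))
    have huv : u ≠ v := by
      rintro rfl
      exact hG u (.single (Or.inl hedge))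
    exact (hG.delUnl u v).merge_of_not_transGen huv hnuv hnvu

/-- Any graph obtained from a canonical AOE by a finite sequence of
applications of Rules 1, 2 and 3 contains no directed cycle. -/
theorem stmt6 {V T : Type} [DecidableEq V] [Fintype T] (G A : AOE V T)
    (hG : Canonical G) (h : Relation.ReflTransGen Step G A) : A.Acyclic := by
  induction h with
  | refl => exact hG.1
  | tail _ hstep ih => exact hstep.acyclic ih

end AOEPaper
end
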